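/- Let E₀ and E i (for i in a finite index type ι) be finite-dimensional real inner product spaces, and for each i let L i : WithLp 2 (E₀ × E i) → ℝ be differentiable. Define the multitask objective F : WithLp 2 (E₀ × PiLp 2 E) → ℝ by F (W₀, W) = ∑ᵢ L i (W₀, W i). Suppose curves W₀ : ℝ → E₀ and W i : ℝ → E i satisfy, for every t, HasDerivAt W₀ (-(∑ᵢ (∇(L i) (W₀ t, W i t)).1)) t and, for each i, HasDerivAt (W i) (-(∇(L i) (W₀ t, W i t)).2) t (the continuous-time analogue of the distributed multitask learning algorithm, where the shared weights descend along the sum of the per-task gradients and each task's weights descend along its own gradient). Then the combined curve t ↦ (W₀ t, fun i => W i t) satisfies, for every t, HasDerivAt (fun t => (W₀ t, fun i => W i t)) (-∇F (W₀ t, fun i => W i t)) t; that is, the distributed scheme is a gradient flow trajectory of the composite multitask objective F. -/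

import Mathlib

/-!
The objective is `∑ i, L i ∘ P i`, where `P i` is the continuous linear restriction of the joint
parameters to task `i`, so its gradient is `∑ i, (P i)† (∇ L i)`. The adjoint `(P i)†` places
`∇ L i` in the shared slot and the `i`-th task slot, so this sum is
`(∑ i, (∇ L i).1, fun i => (∇ L i).2)`: exactly the negated velocity of the distributed scheme.
-/

open scoped InnerProduct

section Gradient

variable {𝕜 F G : Type*} [RCLike 𝕜] [NormedAddCommGroup F] [InnerProductSpace 𝕜 F]
  [CompleteSpace F] [NormedAddCommGroup G] [InnerProductSpace 𝕜 G] [CompleteSpace G]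

theorem HasGradientAt.comp_continuousLinearMap {f : G → 𝕜} {g : G} {x : F} (A : F →L[𝕜] G)
    (h : HasGradientAt f g (A x)) : HasGradientAt (f ∘ A) ((A†) g) x := by
  rw [hasGradientAt_iff_hasFDerivAt] at h ⊢
  refine (h.comp x A.hasFDerivAt).congr_fderiv ?_
  ext u
  simp [ContinuousLinearMap.adjoint_inner_left]

theorem HasGradientAt.sum {ι : Type*} {s : Finset ι} {f : ι → F → 𝕜} {g : ι → F} {x : F}
    (h : ∀ i ∈ s, HasGradientAt (f i) (g i) x) :
    HasGradientAt (fun y => ∑ i ∈ s, f i y) (∑ i ∈ s, g i) x := by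
  simp only [hasGradientAt_iff_hasFDerivAt, map_sum] at h ⊢
  exact HasFDerivAt.fun_sum h

end Gradient

section Curves

variable {𝕜 : Type*} [NontriviallyNormedField 𝕜] {p : ENNReal} [Fact (1 ≤ p)]
  {F G : Type*} [NormedAddCommGroup F] [NormedSpace 𝕜 F] [NormedAddCommGroup G]
  [NormedSpace 𝕜 G] {ι : Type*} [Fintype ι] {E : ι → Type*} [∀ i, NormedAddCommGroup (E i)]
  [∀ i, NormedSpace 𝕜 (E i)]
  {t : 𝕜}

theorem HasDerivAt.toLp_prodMk {f : 𝕜 → F} {g : 𝕜 → G} {f' : F} {g' : G}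
    (hf : HasDerivAt f f' t) (hg : HasDerivAt g g' t) :
    HasDerivAt (fun t => WithLp.toLp p (f t, g t)) (WithLp.toLp p (f', g')) t :=
  (WithLp.prodContinuousLinearEquiv p 𝕜 F G).symm.hasFDerivAt.comp_hasDerivAt t (hf.prodMk hg)

theorem hasDerivAt_toLp_pi {f : ∀ i, 𝕜 → E i} {f' : ∀ i, E i}
    (hf : ∀ i, HasDerivAt (f i) (f' i) t) :
    HasDerivAt (fun t => WithLp.toLp p fun i => f i t) (WithLp.toLp p f') t :=
  (PiLp.continuousLinearEquiv p 𝕜 E).symm.hasFDerivAt.comp_hasDerivAt t (hasDerivAt_pi.2 hf)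

end Curves

namespace Multitask

variable {ι : Type*} [Fintype ι] {E₀ : Type*} [NormedAddCommGroup E₀] [InnerProductSpace ℝ E₀]
  {E : ι → Type*} [∀ i, NormedAddCommGroup (E i)] [∀ i, InnerProductSpace ℝ (E i)]

variable (E₀ E) in
noncomputable def taskProj (i : ι) : WithLp 2 (E₀ × PiLp 2 E) →L[ℝ] WithLp 2 (E₀ × E i) :=
  (WithLp.prodContinuousLinearEquiv 2 ℝ E₀ (E i)).symm ∘L
    (WithLp.fstL 2 ℝ E₀ (PiLp 2 E)).prod (PiLp.proj 2 E i ∘L WithLp.sndL 2 ℝ E₀ (PiLp 2 E))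

omit [Fintype ι] in
@[simp]
theorem taskProj_apply (i : ι) (p : WithLp 2 (E₀ × PiLp 2 E)) :
    taskProj E₀ E i p = WithLp.toLp 2 (p.ofLp.1, p.ofLp.2.ofLp i) := rfl

variable [CompleteSpace E₀] [∀ i, CompleteSpace (E i)]

theorem sum_adjoint_taskProj_apply (g : ∀ i, WithLp 2 (E₀ × E i)) :
    ∑ i, ((taskProj E₀ E i)†) (g i) =
      WithLp.toLp 2 (∑ i, (g i).ofLp.1, WithLp.toLp 2 fun i => (g i).ofLp.2) := by
  refine ext_inner_right ℝ fun u => ?_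
  simp [sum_inner, ContinuousLinearMap.adjoint_inner_left, WithLp.prod_inner_apply,
    PiLp.inner_apply, Finset.sum_add_distrib]

theorem hasGradientAt_sum_comp_taskProj {L : ∀ i, WithLp 2 (E₀ × E i) → ℝ}
    {x : WithLp 2 (E₀ × PiLp 2 E)} (hL : ∀ i, DifferentiableAt ℝ (L i) (taskProj E₀ E i x)) :
    HasGradientAt (fun p => ∑ i, L i (taskProj E₀ E i p))
      (WithLp.toLp 2 (∑ i, (gradient (L i) (taskProj E₀ E i x)).ofLp.1,
        WithLp.toLp 2 fun i => (gradient (L i) (taskProj E₀ E i x)).ofLp.2)) x := by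
  rw [← sum_adjoint_taskProj_apply]
  exact HasGradientAt.sum fun i _ => (hL i).hasGradientAt.comp_continuousLinearMap _

end Multitask

open Multitask in
/-- The continuous-time analogue of the distributed multitask learning algorithm is a
gradient flow trajectory of the composite multitask objective
`F (W₀, W) = ∑ i, L i (W₀, W i)`: if the shared weights `W₀` descend along the sum of the
per-task shared-parameter gradients and each task's weights `W i` descend along its own
gradient, then the combined curve `t ↦ (W₀ t, fun i => W i t)` is a gradient flow of `F`. -/
theorem distributed_multitask_gradient_flow
    {ι : Type*} [Fintype ι]
    {E₀ : Type*} [NormedAddCommGroup E₀] [InnerProductSpace ℝ E₀] [FiniteDimensional ℝ E₀]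
    {E : ι → Type*} [∀ i, NormedAddCommGroup (E i)] [∀ i, InnerProductSpace ℝ (E i)]
    [∀ i, FiniteDimensional ℝ (E i)]
    (L : ∀ i, WithLp 2 (E₀ × E i) → ℝ) (hL : ∀ i, Differentiable ℝ (L i))
    (W₀ : ℝ → E₀) (W : ∀ i, ℝ → E i)
    (hW₀ : ∀ t, HasDerivAt W₀
      (-(∑ i, (gradient (L i) (WithLp.toLp 2 (W₀ t, W i t) : WithLp 2 (E₀ × E i))).ofLp.1)) t)
    (hW : ∀ i, ∀ t, HasDerivAt (W i)
      (-(gradient (L i) (WithLp.toLp 2 (W₀ t, W i t) : WithLp 2 (E₀ × E i))).ofLp.2) t) :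
    ∀ t, HasDerivAt
      (fun t => (WithLp.toLp 2 (W₀ t, WithLp.toLp 2 (fun i => W i t)) : WithLp 2 (E₀ × PiLp 2 E)))
      (-gradient
        (fun p : WithLp 2 (E₀ × PiLp 2 E) => ∑ i, L i (WithLp.toLp 2 (p.ofLp.1, p.ofLp.2.ofLp i) : WithLp 2 (E₀ × E i)))
        (WithLp.toLp 2 (W₀ t, WithLp.toLp 2 (fun i => W i t)) : WithLp 2 (E₀ × PiLp 2 E))) t := by
  intro t
  have hF := (hasGradientAt_sum_comp_taskProj
    (x := WithLp.toLp 2 (W₀ t, WithLp.toLp 2 fun i => W i t)) fun i => hL i _).gradient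
  simp only [taskProj_apply] at hF
  rw [hF, ← WithLp.toLp_neg, Prod.neg_mk, ← WithLp.toLp_neg]
  exact (hW₀ t).toLp_prodMk (hasDerivAt_toLp_pi fun i => hW i t)
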